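/- Let k ≥ 3, let P ⊆ S² be a set of k points in general position, P̂ = P ∪ (−P), let p ∈ P, and let H = { cos(t)·p + sin(t)·v : t ∈ [0,π] } be a half-circle with endpoints p and −p such that its great circle span{p,v} ∩ S² meets P̂ only in {p, −p}. Then the number of edges {a,b} of P̂ with a, b ∉ {p, −p} such that arc(a,b) ∩ H ≠ ∅ equals (1/2)·(k−1)(k−2). -/

import Mathlib

open Set
open scoped RealInnerProductSpace

noncomputable section

/-- Three-dimensional Euclidean space. -/
abbrev E3 : Type := EuclideanSpace ℝ (Fin 3)

/-- The unit sphere `S²` in `ℝ³`. -/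
def unitSphere : Set E3 := {x | ‖x‖ = 1}

/-- The geodesic arc from `p` to `q`: the radial projection onto the sphere of the
straight segment from `p` to `q`. -/
def arc (p q : E3) : Set E3 :=
  {x | ∃ t ∈ Icc (0 : ℝ) 1, x = ‖(1 - t) • p + t • q‖⁻¹ • ((1 - t) • p + t • q)}

/-- The half-circle with endpoints `p` and `-p` determined by a direction `v`. -/
def halfCircle (p v : E3) : Set E3 :=
  {x | ∃ t ∈ Icc (0 : ℝ) Real.pi, x = Real.cos t • p + Real.sin t • v}

/-- A set of points is in general position if every three distinct points of it are
linearly independent. -/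
def GenPos (P : Set E3) : Prop :=
  ∀ a ∈ P, ∀ b ∈ P, ∀ c ∈ P, a ≠ b → a ≠ c → b ≠ c → LinearIndependent ℝ ![a, b, c]

/-- `P̂ = P ∪ (-P)`: the set `P` together with the antipodes of its points. -/
def phat (P : Set E3) : Set E3 := P ∪ (fun x => -x) '' P

/-- The edges of a vertex set `V`: unordered pairs `{a, b}` of points of `V`
with `b ∉ {a, -a}`. -/
def edges (V : Set E3) : Set (Sym2 E3) :=
  {e | ∃ a b, a ∈ V ∧ b ∈ V ∧ b ≠ a ∧ b ≠ -a ∧ e = s(a, b)}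

/-- A curve of a drawing: a subset of the sphere together with its set of endpoints. -/
abbrev Curve : Type := Set E3 × Set E3

/-- The curves of the drawing determined by `P`: the geodesic arcs `arc a b` for all
edges `{a, b}` of `P̂`, together with the half-circles `halfCircle p (v p)` joining
`p` and `-p` for `p ∈ P'`. -/
def drawingCurves (P : Set E3) (v : E3 → E3) (P' : Set E3) : Set Curve :=
  {c | (∃ a b, a ∈ phat P ∧ b ∈ phat P ∧ b ≠ a ∧ b ≠ -a ∧
          c = (arc a b, ({a, b} : Set E3))) ∨
       (∃ p ∈ P', c = (halfCircle p (v p), ({p, -p} : Set E3)))}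

/-- The crossing pairs of a drawing: unordered pairs of distinct curves sharing a point
that is not an endpoint of either curve. -/
def crossingPairs (D : Set Curve) : Set (Sym2 Curve) :=
  {pr | ∃ c ∈ D, ∃ d ∈ D, c ≠ d ∧
    (∃ x, x ∈ c.1 ∧ x ∈ d.1 ∧ x ∉ c.2 ∧ x ∉ d.2) ∧ pr = s(c, d)}

/-- Hill's number `H(n)` as a rational number. -/
def Hfun (n : ℕ) : ℚ :=
  (1 / 4 : ℚ) * ((n / 2 : ℕ) : ℚ) * (((n - 1) / 2 : ℕ) : ℚ) *
    (((n - 2) / 2 : ℕ) : ℚ) * (((n - 3) / 2 : ℕ) : ℚ)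

/-! Let `n` be a normal of the plane spanned by `p` and `v`. By hypothesis no point of
`P̂ \ {p, -p}` lies on that plane, and since general position (with `k ≥ 3`) rules out antipodal
pairs in `P`, exactly `k - 1` of these points lie on each side of it, the two sides being exchanged
by `x ↦ -x`. An arc meets `H` only if its endpoints `a`, `b` lie on opposite sides; it then crosses
the great circle in a single point, which lies in `H` iff its inner product with `v` is positive,
and by general position that inner product is never zero. The involution `(a, b) ↦ (-b, -a)` of
the `(k - 1)(k - 2)` such ordered pairs with `b ≠ -a` reverses its sign, so exactly half of them
meet `H`. -/

section Counting

variable {α β : Type*}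

theorem two_mul_ncard_setOf_pos_eq_ncard {S : Set α} (hS : S.Finite) {σ : α → α}
    (hσ : Function.Involutive σ) (hσS : MapsTo σ S S) (g : α → ℝ)
    (hgσ : ∀ x ∈ S, g (σ x) = -g x) (hg : ∀ x ∈ S, g x ≠ 0) :
    2 * {x ∈ S | 0 < g x}.ncard = S.ncard := by
  have himage : σ '' {x ∈ S | 0 < g x} = {x ∈ S | g x < 0} := by
    ext x
    constructor
    · rintro ⟨y, ⟨hyS, hy⟩, rfl⟩
      exact ⟨hσS hyS, by linarith [hgσ y hyS]⟩
    · rintro ⟨hxS, hx⟩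
      exact ⟨σ x, ⟨hσS hxS, by linarith [hgσ x hxS]⟩, hσ x⟩
  have hunion : S = {x ∈ S | 0 < g x} ∪ {x ∈ S | g x < 0} := by
    ext x
    constructor
    · intro hx
      rcases (hg x hx).lt_or_gt with h | h
      exacts [Or.inr ⟨hx, h⟩, Or.inl ⟨hx, h⟩]
    · rintro (⟨hx, -⟩ | ⟨hx, -⟩) <;> exact hx
  have hdisj : Disjoint {x ∈ S | 0 < g x} {x ∈ S | g x < 0} :=
    Set.disjoint_left.2 fun x hpos hneg => by linarith [hpos.2, hneg.2]
  conv_rhs => rw [hunion, Set.ncard_union_eq hdisj (hS.subset (Set.sep_subset _ _))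
    (hS.subset (Set.sep_subset _ _)), ← himage, Set.ncard_image_of_injective _ hσ.injective]
  ring

theorem ncard_setOf_prod_ne {s : Set α} {t : Set β} (hs : s.Finite) {φ : α → β}
    (hφ : MapsTo φ s t) : {q ∈ s ×ˢ t | q.2 ≠ φ q.1}.ncard = s.ncard * (t.ncard - 1) := by
  have hgraph : Function.Injective fun x => (x, φ x) := fun x y h => (Prod.mk.inj h).1
  have heq : {q ∈ s ×ˢ t | q.2 ≠ φ q.1} = s ×ˢ t \ (fun x => (x, φ x)) '' s := by
    ext ⟨a, b⟩
    simp only [Set.mem_prod, Set.mem_sdiff, Set.mem_image, Prod.mk.injEq]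
    constructor
    · rintro ⟨hab, hb⟩
      exact ⟨hab, fun ⟨x, _, hxa, hxb⟩ => hb (hxa ▸ hxb.symm)⟩
    · rintro ⟨hab, hb⟩
      exact ⟨hab, fun h => hb ⟨a, hab.1, rfl, h.symm⟩⟩
  have hsub : (fun x => (x, φ x)) '' s ⊆ s ×ˢ t := by
    rintro _ ⟨x, hx, rfl⟩
    exact ⟨hx, hφ hx⟩
  rw [heq, Set.ncard_sdiff hsub (hs.image _),
    Set.ncard_prod, Set.ncard_image_of_injective _ hgraph, Nat.mul_sub_one]

end Counting

section InnerProductSpace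

variable {E : Type*} [NormedAddCommGroup E] [InnerProductSpace ℝ E]

theorem exists_inner_eq_zero_iff_mem [FiniteDimensional ℝ E] {K : Submodule ℝ E}
    (hK : Module.finrank ℝ K + 1 = Module.finrank ℝ E) :
    ∃ n : E, ∀ x, ⟪n, x⟫ = 0 ↔ x ∈ K := by
  have h1 : Module.finrank ℝ Kᗮ = 1 := by
    have := K.finrank_add_finrank_orthogonal
    omega
  obtain ⟨n, hnK, hn0⟩ := Submodule.exists_mem_ne_zero_of_ne_bot (p := Kᗮ) fun h => by
    rw [h, finrank_bot] at h1
    exact zero_ne_one h1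
  have hspan : ℝ ∙ n = Kᗮ := Submodule.eq_of_le_of_finrank_eq
    ((Submodule.span_singleton_le_iff_mem _ _).2 hnK) (by rw [finrank_span_singleton hn0, h1])
  refine ⟨n, fun x => ?_⟩
  rw [← Submodule.mem_orthogonal_singleton_iff_inner_right, hspan, Submodule.orthogonal_orthogonal]

theorem ne_neg_self_of_ne_zero {a : E} (ha : a ≠ 0) : a ≠ -a := by
  rwa [Ne, eq_neg_iff_add_eq_zero, ← two_smul ℝ, smul_eq_zero, or_iff_right two_ne_zero]

variable {p v : E}

theorem inner_smul_add_smul_left (hp : ‖p‖ = 1) (hpv : ⟪p, v⟫ = 0) (a b : ℝ) :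
    ⟪p, a • p + b • v⟫ = a := by
  simp [inner_add_right, real_inner_smul_right, hpv, hp]

theorem inner_smul_add_smul_right (hv : ‖v‖ = 1) (hpv : ⟪p, v⟫ = 0) (a b : ℝ) :
    ⟪v, a • p + b • v⟫ = b := by
  simp [inner_add_right, real_inner_smul_right, real_inner_comm p v, hpv, hv]

theorem norm_smul_add_smul_sq (hp : ‖p‖ = 1) (hv : ‖v‖ = 1) (hpv : ⟪p, v⟫ = 0) (a b : ℝ) :
    ‖a • p + b • v‖ ^ 2 = a ^ 2 + b ^ 2 := by
  rw [← real_inner_self_eq_norm_sq, inner_add_left, real_inner_smul_left, real_inner_smul_left,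
    inner_smul_add_smul_left hp hpv, inner_smul_add_smul_right hv hpv]
  ring

theorem finrank_span_pair_of_orthonormal (hp : ‖p‖ = 1) (hv : ‖v‖ = 1) (hpv : ⟪p, v⟫ = 0) :
    Module.finrank ℝ (Submodule.span ℝ {p, v}) = 2 := by
  have hind : LinearIndependent ℝ ![p, v] := LinearIndependent.pair_iff.2 fun a b h =>
    ⟨by rw [← inner_smul_add_smul_left hp hpv a b, h, inner_zero_right],
      by rw [← inner_smul_add_smul_right hv hpv a b, h, inner_zero_right]⟩
  have := finrank_span_eq_card hind
  rwa [Matrix.range_cons_cons_empty, Fintype.card_fin] at this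

/-- Up to a positive factor, the point where the segment from `a` to `b` crosses the plane
`⟪n, ·⟫ = 0` when `a` and `b` lie on opposite sides of it. -/
def crossing (n a b : E) : E := ⟪n, a⟫ • b - ⟪n, b⟫ • a

variable {n a b : E}

theorem inner_crossing_eq_zero (n a b : E) : ⟪n, crossing n a b⟫ = 0 := by
  rw [crossing, inner_sub_right, real_inner_smul_right, real_inner_smul_right]
  ring

theorem crossing_neg_neg (n a b : E) : crossing n (-b) (-a) = -crossing n a b := by
  simp only [crossing, inner_neg_right, neg_smul, smul_neg, neg_neg, neg_sub]

theorem sub_smul_segment_eq (n a b : E) (t : ℝ) :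
    (⟪n, a⟫ - ⟪n, b⟫) • ((1 - t) • a + t • b) =
      crossing n a b + ⟪n, (1 - t) • a + t • b⟫ • (a - b) := by
  simp only [crossing, inner_add_right, real_inner_smul_right]
  module

theorem inner_crossing_ne_zero (hv : ‖v‖ = 1) (hpv : ⟪p, v⟫ = 0)
    (hn : ∀ x, ⟪n, x⟫ = 0 ↔ x ∈ Submodule.span ℝ {p, v})
    (habp : LinearIndependent ℝ ![a, b, p]) (ha : ⟪n, a⟫ ≠ 0) : ⟪v, crossing n a b⟫ ≠ 0 := by
  intro h
  obtain ⟨α, β, hαβ⟩ := Submodule.mem_span_pair.1 ((hn _).1 (inner_crossing_eq_zero n a b))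
  have hβ : β = 0 := by rw [← inner_smul_add_smul_right hv hpv α β, hαβ, h]
  have hp : α • p = crossing n a b := by rwa [hβ, zero_smul, add_zero] at hαβ
  have hdep : ∑ i, ![-⟪n, b⟫, ⟪n, a⟫, -α] i • ![a, b, p] i = 0 := by
    simp only [Fin.sum_univ_three, Matrix.cons_val_zero, Matrix.cons_val_one, Matrix.cons_val_two,
      Matrix.head_cons, Matrix.tail_cons, neg_smul, hp, crossing]
    abel
  exact ha (Fintype.linearIndependent_iff.1 habp _ hdep 1)

end InnerProductSpace

theorem exists_inner_eq_zero_iff_mem_span_pair {p v : E3} (hp : ‖p‖ = 1) (hv : ‖v‖ = 1)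
    (hpv : ⟪p, v⟫ = 0) : ∃ n : E3, ∀ x, ⟪n, x⟫ = 0 ↔ x ∈ Submodule.span ℝ {p, v} :=
  exists_inner_eq_zero_iff_mem (by rw [finrank_span_pair_of_orthonormal hp hv hpv,
    finrank_euclideanSpace_fin])

section Sphere

variable {p v n a b x : E3}

theorem mem_halfCircle_iff (hp : ‖p‖ = 1) (hv : ‖v‖ = 1) (hpv : ⟪p, v⟫ = 0) :
    x ∈ halfCircle p v ↔ ‖x‖ = 1 ∧ x ∈ Submodule.span ℝ {p, v} ∧ 0 ≤ ⟪v, x⟫ := by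
  constructor
  · rintro ⟨t, ⟨ht0, htπ⟩, rfl⟩
    refine ⟨?_, Submodule.mem_span_pair.2 ⟨_, _, rfl⟩, ?_⟩
    · have := norm_smul_add_smul_sq hp hv hpv (Real.cos t) (Real.sin t)
      rw [Real.cos_sq_add_sin_sq] at this
      exact (pow_eq_one_iff_of_nonneg (norm_nonneg _) two_ne_zero).1 this
    · rw [inner_smul_add_smul_right hv hpv]
      exact Real.sin_nonneg_of_nonneg_of_le_pi ht0 htπ
  · rintro ⟨hx1, hxs, hxv⟩
    obtain ⟨a, b, rfl⟩ := Submodule.mem_span_pair.1 hxs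
    rw [inner_smul_add_smul_right hv hpv] at hxv
    have hab : a ^ 2 + b ^ 2 = 1 := by rw [← norm_smul_add_smul_sq hp hv hpv, hx1, one_pow]
    have ha : -1 ≤ a ∧ a ≤ 1 := by constructor <;> nlinarith
    refine ⟨Real.arccos a, ⟨Real.arccos_nonneg a, Real.arccos_le_pi a⟩, ?_⟩
    rw [Real.cos_arccos ha.1 ha.2, Real.sin_arccos, show 1 - a ^ 2 = b ^ 2 by linarith,
      Real.sqrt_sq hxv]

theorem inv_norm_smul_mem_halfCircle_iff (hp : ‖p‖ = 1) (hv : ‖v‖ = 1) (hpv : ⟪p, v⟫ = 0)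
    (hn : ∀ x, ⟪n, x⟫ = 0 ↔ x ∈ Submodule.span ℝ {p, v}) (u : E3) :
    ‖u‖⁻¹ • u ∈ halfCircle p v ↔ u ≠ 0 ∧ ⟪n, u⟫ = 0 ∧ 0 ≤ ⟪v, u⟫ := by
  rw [mem_halfCircle_iff hp hv hpv, ← hn]
  by_cases hu : u = 0
  · simp [hu]
  · have hc : 0 < ‖u‖⁻¹ := inv_pos.2 (norm_pos_iff.2 hu)
    have h1 : ‖‖u‖⁻¹ • u‖ = 1 := norm_smul_inv_norm hu
    simp only [h1, real_inner_smul_right, mul_eq_zero, hc.ne', false_or,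
      mul_nonneg_iff_of_pos_left hc, ne_eq, hu, not_false_eq_true, true_and]

theorem arc_comm (a b : E3) : arc a b = arc b a := by
  have key : ∀ a b : E3, arc a b ⊆ arc b a := by
    rintro a b _ ⟨t, ⟨ht0, ht1⟩, rfl⟩
    refine ⟨1 - t, ⟨by linarith, by linarith⟩, ?_⟩
    rw [sub_sub_cancel, add_comm]
  exact (key a b).antisymm (key b a)

theorem inner_pos_of_mem_arc (ha : 0 < ⟪n, a⟫) (hb : 0 < ⟪n, b⟫) (hx : x ∈ arc a b) :
    0 < ⟪n, x⟫ := by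
  obtain ⟨t, ⟨ht0, ht1⟩, rfl⟩ := hx
  have hu : 0 < ⟪n, (1 - t) • a + t • b⟫ := by
    rw [inner_add_right, real_inner_smul_right, real_inner_smul_right]
    rcases ht0.eq_or_lt with rfl | ht
    · simpa using ha
    · nlinarith [mul_pos ht hb, mul_nonneg (sub_nonneg.2 ht1) ha.le]
  have hu0 : (1 - t) • a + t • b ≠ 0 := fun h => by
    rw [h, inner_zero_right] at hu
    exact hu.false
  rw [real_inner_smul_right]
  exact mul_pos (inv_pos.2 (norm_pos_iff.2 hu0)) hu

theorem arc_inter_halfCircle_nonempty_iff (hp : ‖p‖ = 1) (hv : ‖v‖ = 1) (hpv : ⟪p, v⟫ = 0)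
    (hn : ∀ x, ⟪n, x⟫ = 0 ↔ x ∈ Submodule.span ℝ {p, v})
    (habp : LinearIndependent ℝ ![a, b, p]) (ha : 0 < ⟪n, a⟫) (hb : ⟪n, b⟫ < 0) :
    (arc a b ∩ halfCircle p v).Nonempty ↔ 0 < ⟪v, crossing n a b⟫ := by
  have hab : 0 < ⟪n, a⟫ - ⟪n, b⟫ := by linarith
  constructor
  · rintro ⟨_, ⟨t, -, rfl⟩, hH⟩
    obtain ⟨-, hnu, hvu⟩ := (inv_norm_smul_mem_halfCircle_iff hp hv hpv hn _).1 hH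
    have hc : crossing n a b = (⟪n, a⟫ - ⟪n, b⟫) • ((1 - t) • a + t • b) := by
      rw [sub_smul_segment_eq, hnu, zero_smul, add_zero]
    refine (inner_crossing_ne_zero hv hpv hn habp ha.ne').symm.lt_of_le ?_
    rw [hc, real_inner_smul_right]
    exact mul_nonneg hab.le hvu
  · intro hc
    set t := ⟪n, a⟫ / (⟪n, a⟫ - ⟪n, b⟫)
    set u := (1 - t) • a + t • b
    have hnu : ⟪n, u⟫ = 0 := by
      simp only [u, t, inner_add_right, real_inner_smul_right]
      field_simp
      ring
    have hu : u = (⟪n, a⟫ - ⟪n, b⟫)⁻¹ • crossing n a b := by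
      rw [eq_inv_smul_iff₀ hab.ne', sub_smul_segment_eq, hnu, zero_smul, add_zero]
    have hvu : 0 < ⟪v, u⟫ := by
      rw [hu, real_inner_smul_right]
      exact mul_pos (inv_pos.2 hab) hc
    refine ⟨‖u‖⁻¹ • u, ⟨t, ⟨div_nonneg ha.le hab.le, ?_⟩, rfl⟩,
      (inv_norm_smul_mem_halfCircle_iff hp hv hpv hn u).2 ⟨?_, hnu, hvu.le⟩⟩
    · rw [div_le_one hab]
      linarith
    · rintro h
      rw [h, inner_zero_right] at hvu
      exact hvu.false

theorem inner_eq_zero_of_mem_halfCircle (hp : ‖p‖ = 1) (hv : ‖v‖ = 1)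
    (hpv : ⟪p, v⟫ = 0) (hn : ∀ x, ⟪n, x⟫ = 0 ↔ x ∈ Submodule.span ℝ {p, v})
    (hx : x ∈ halfCircle p v) : ⟪n, x⟫ = 0 :=
  (hn x).2 ((mem_halfCircle_iff hp hv hpv).1 hx).2.1

theorem inner_mul_inner_nonpos_of_mem_arc (hx : x ∈ arc a b)
    (hnx : ⟪n, x⟫ = 0) : ⟪n, a⟫ * ⟪n, b⟫ ≤ 0 := by
  by_contra! h
  rcases mul_pos_iff.1 h with ⟨ha, hb⟩ | ⟨ha, hb⟩
  · exact (inner_pos_of_mem_arc ha hb hx).ne' hnx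
  · have := inner_pos_of_mem_arc (n := -n) (by rwa [inner_neg_left, neg_pos])
      (by rwa [inner_neg_left, neg_pos]) hx
    rw [inner_neg_left, hnx, neg_zero] at this
    exact this.false

end Sphere

section GeneralPosition

variable {P : Set E3} {p n a b c : E3}

theorem finite_phat (hP : P.Finite) : (phat P).Finite :=
  hP.union (hP.image _)

theorem phat_subset_unitSphere (hP : P ⊆ unitSphere) : phat P ⊆ unitSphere := by
  rintro _ (ha | ⟨a, ha, rfl⟩)
  · exact hP ha
  · simpa [unitSphere] using hP ha

theorem neg_mem_phat (ha : a ∈ phat P) : -a ∈ phat P := by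
  rcases ha with ha | ⟨a, ha, rfl⟩
  · exact Or.inr ⟨a, ha, rfl⟩
  · rw [neg_neg]
    exact Or.inl ha

theorem exists_mem_units_smul_of_mem_phat (ha : a ∈ phat P) :
    ∃ a₀ ∈ P, (a₀ = a ∨ a₀ = -a) ∧ ∃ ε : ℝˣ, a = ε • a₀ := by
  rcases ha with ha | ⟨a₀, ha₀, rfl⟩
  · exact ⟨a, ha, Or.inl rfl, 1, (one_smul _ _).symm⟩
  · exact ⟨a₀, ha₀, Or.inr (neg_neg a₀).symm, -1, by simp⟩

theorem GenPos.linearIndependent_of_mem_phat (hgen : GenPos P) (ha : a ∈ phat P)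
    (hb : b ∈ phat P) (hc : c ∈ phat P) (hab : b ∉ ({a, -a} : Set E3))
    (hac : a ∉ ({c, -c} : Set E3)) (hbc : b ∉ ({c, -c} : Set E3)) :
    LinearIndependent ℝ ![a, b, c] := by
  have hne : ∀ {x x₀ y y₀ : E3}, (x₀ = x ∨ x₀ = -x) → (y₀ = y ∨ y₀ = -y) →
      y ∉ ({x, -x} : Set E3) → x₀ ≠ y₀ := by
    rintro x _ y _ (rfl | rfl) (rfl | rfl) hxy h <;> simp_all
  obtain ⟨a₀, ha₀, ha₀a, εa, rfl⟩ := exists_mem_units_smul_of_mem_phat ha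
  obtain ⟨b₀, hb₀, hb₀b, εb, rfl⟩ := exists_mem_units_smul_of_mem_phat hb
  obtain ⟨c₀, hc₀, hc₀c, εc, rfl⟩ := exists_mem_units_smul_of_mem_phat hc
  have := (hgen a₀ ha₀ b₀ hb₀ c₀ hc₀ (hne ha₀a hb₀b hab) (hne hc₀c ha₀a hac).symm
    (hne hc₀c hb₀b hbc).symm).units_smul ![εa, εb, εc]
  convert this using 1
  ext i : 1
  fin_cases i <;> rfl

theorem GenPos.neg_notMem (hgen : GenPos P) (hP : 3 ≤ P.ncard) (ha : a ∈ P) (ha0 : a ≠ 0) :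
    -a ∉ P := by
  intro hna
  have hlt : ({a, -a} : Set E3).ncard < P.ncard :=
    ((Set.ncard_insert_le _ _).trans (by simp)).trans_lt hP
  obtain ⟨c, hc, hcnot⟩ := Set.exists_mem_notMem_of_ncard_lt_ncard hlt
  simp only [Set.mem_insert_iff, Set.mem_singleton_iff, not_or] at hcnot
  have hind := hgen a ha (-a) hna c hc (ne_neg_self_of_ne_zero ha0) (Ne.symm hcnot.1)
    (Ne.symm hcnot.2)
  exact one_ne_zero (Fintype.linearIndependent_iff.1 hind ![1, 1, 0]
    (by simp [Fin.sum_univ_three]) 0)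

theorem ncard_phat (hgen : GenPos P) (hP : 3 ≤ P.ncard) (h0 : (0 : E3) ∉ P) :
    (phat P).ncard = 2 * P.ncard := by
  have hfin : P.Finite := Set.finite_of_ncard_pos (by omega)
  have hdisj : Disjoint P ((fun x => -x) '' P) := Set.disjoint_left.2 fun a ha ⟨b, hb, hba⟩ =>
    hgen.neg_notMem hP hb (ne_of_mem_of_not_mem hb h0) ((show -b = a from hba) ▸ ha)
  rw [phat, Set.ncard_union_eq hdisj hfin (hfin.image _),
    Set.ncard_image_of_injective _ neg_injective]
  ring

end GeneralPosition

section Transversals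

variable {P : Set E3} {p v n : E3}

theorem mapsTo_neg_phat_sdiff_pair :
    MapsTo (fun x => -x) (phat P \ {p, -p}) (phat P \ {p, -p}) := by
  rintro x ⟨hx, hxp⟩
  refine ⟨neg_mem_phat hx, ?_⟩
  simp only [Set.mem_insert_iff, Set.mem_singleton_iff, neg_eq_iff_eq_neg, neg_neg] at hxp ⊢
  tauto

theorem ncard_phat_sdiff_pair (hgen : GenPos P) (hP : 3 ≤ P.ncard) (h0 : (0 : E3) ∉ P)
    (hp : p ∈ P) : (phat P \ {p, -p}).ncard = 2 * P.ncard - 2 := by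
  have hsub : ({p, -p} : Set E3) ⊆ phat P := by
    rintro x (rfl | rfl)
    exacts [Or.inl hp, Or.inr ⟨p, hp, rfl⟩]
  rw [Set.ncard_sdiff hsub, ncard_phat hgen hP h0,
    Set.ncard_pair (ne_neg_self_of_ne_zero (ne_of_mem_of_not_mem hp h0))]

def posSide (P : Set E3) (p n : E3) : Set E3 := {x ∈ phat P \ {p, -p} | 0 < ⟪n, x⟫}

def transversals (P : Set E3) (p n : E3) : Set (E3 × E3) :=
  {q ∈ posSide P p n ×ˢ posSide P p (-n) | q.2 ≠ -q.1}

theorem mapsTo_neg_posSide : MapsTo (fun x => -x) (posSide P p n) (posSide P p (-n)) :=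
  fun _ ⟨hx, hnx⟩ => ⟨mapsTo_neg_phat_sdiff_pair hx, by rwa [inner_neg_neg]⟩

theorem ncard_posSide (hgen : GenPos P) (hP : 3 ≤ P.ncard) (h0 : (0 : E3) ∉ P) (hp : p ∈ P)
    (hW : ∀ x ∈ phat P \ {p, -p}, ⟪n, x⟫ ≠ 0) : (posSide P p n).ncard = P.ncard - 1 := by
  have h := two_mul_ncard_setOf_pos_eq_ncard
    ((finite_phat (Set.finite_of_ncard_pos (by omega))).sdiff) neg_involutive
    mapsTo_neg_phat_sdiff_pair (fun x => ⟪n, x⟫) (fun x _ => inner_neg_right n x) hW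
  rw [ncard_phat_sdiff_pair hgen hP h0 hp] at h
  unfold posSide
  omega

theorem ncard_transversals (hgen : GenPos P) (hP : 3 ≤ P.ncard) (h0 : (0 : E3) ∉ P)
    (hp : p ∈ P) (hW : ∀ x ∈ phat P \ {p, -p}, ⟪n, x⟫ ≠ 0) :
    (transversals P p n).ncard = (P.ncard - 1) * (P.ncard - 2) := by
  have hW' : ∀ x ∈ phat P \ {p, -p}, ⟪-n, x⟫ ≠ 0 := fun x hx => by
    rw [inner_neg_left, neg_ne_zero]
    exact hW x hx
  have hfin : (posSide P p n).Finite :=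
    (finite_phat (Set.finite_of_ncard_pos (by omega))).sdiff.subset (Set.sep_subset _ _)
  rw [transversals, ncard_setOf_prod_ne hfin mapsTo_neg_posSide, ncard_posSide hgen hP h0 hp hW,
    ncard_posSide hgen hP h0 hp hW', Nat.sub_sub]

theorem GenPos.linearIndependent_of_mem_transversals (hgen : GenPos P) (hp : p ∈ P)
    {q : E3 × E3} (hq : q ∈ transversals P p n) : LinearIndependent ℝ ![q.1, q.2, p] := by
  obtain ⟨⟨⟨⟨ha, hap⟩, hna⟩, ⟨hb, hbp⟩, hnb⟩, hba⟩ := hq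
  refine hgen.linearIndependent_of_mem_phat ha hb (Or.inl hp) ?_ hap hbp
  rintro (h | h)
  · rw [h, inner_neg_left] at hnb
    linarith
  · exact hba h

theorem two_mul_ncard_setOf_inner_crossing_pos (hPfin : P.Finite) (hgen : GenPos P) (hp : p ∈ P)
    (hv : ‖v‖ = 1) (hpv : ⟪p, v⟫ = 0) (hn : ∀ x, ⟪n, x⟫ = 0 ↔ x ∈ Submodule.span ℝ {p, v}) :
    2 * {q ∈ transversals P p n | 0 < ⟪v, crossing n q.1 q.2⟫}.ncard =
      (transversals P p n).ncard := by
  have hfin : ∀ m, (posSide P p m).Finite := fun _ =>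
    (finite_phat hPfin).sdiff.subset (Set.sep_subset _ _)
  refine two_mul_ncard_setOf_pos_eq_ncard
    (((hfin n).prod (hfin (-n))).subset (Set.sep_subset _ _))
    (σ := fun q => (-q.2, -q.1)) (fun q => by simp) ?_ _ ?_ ?_
  · rintro ⟨a, b⟩ ⟨⟨ha, hb⟩, hba⟩
    have hb' := mapsTo_neg_posSide (n := -n) hb
    rw [neg_neg] at hb'
    exact ⟨⟨hb', mapsTo_neg_posSide ha⟩, fun h => hba (by simpa using h.symm)⟩
  · intro q _
    simp only [crossing_neg_neg, inner_neg_right]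
  · exact fun q hq => inner_crossing_ne_zero hv hpv hn
      (hgen.linearIndependent_of_mem_transversals hp hq) hq.1.1.2.ne'

theorem injOn_sym2_mk_transversals :
    InjOn (fun q : E3 × E3 => s(q.1, q.2)) (transversals P p n) := by
  rintro ⟨a, b⟩ ⟨⟨⟨_, ha⟩, _⟩, _⟩ ⟨c, d⟩ ⟨⟨_, _, hd⟩, _⟩ h
  rcases Sym2.eq_iff.1 h with ⟨rfl, rfl⟩ | ⟨rfl, rfl⟩
  · rfl
  · rw [inner_neg_left] at hd
    linarith

end Transversals

theorem setOf_edges_meeting_halfCircle_eq_image {P : Set E3} {p v n : E3} (hgen : GenPos P)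
    (hp : p ∈ P) (hpS : ‖p‖ = 1) (hv : ‖v‖ = 1) (hpv : ⟪p, v⟫ = 0)
    (hn : ∀ x, ⟪n, x⟫ = 0 ↔ x ∈ Submodule.span ℝ {p, v})
    (hW : ∀ x ∈ phat P \ {p, -p}, ⟪n, x⟫ ≠ 0) :
    {e : Sym2 E3 | ∃ a b, a ∈ phat P ∧ b ∈ phat P ∧ b ≠ a ∧ b ≠ -a ∧
        a ∉ ({p, -p} : Set E3) ∧ b ∉ ({p, -p} : Set E3) ∧
        (arc a b ∩ halfCircle p v).Nonempty ∧ e = s(a, b)} =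
      (fun q : E3 × E3 => s(q.1, q.2)) ''
        {q ∈ transversals P p n | 0 < ⟪v, crossing n q.1 q.2⟫} := by
  have key : ∀ q ∈ transversals P p n,
      (arc q.1 q.2 ∩ halfCircle p v).Nonempty ↔ 0 < ⟪v, crossing n q.1 q.2⟫ := fun q hq =>
    arc_inter_halfCircle_nonempty_iff hpS hv hpv hn
      (hgen.linearIndependent_of_mem_transversals hp hq) hq.1.1.2
      (by simpa [inner_neg_left] using hq.1.2.2)
  ext e
  constructor
  · rintro ⟨a, b, ha, hb, -, hba, hap, hbp, ⟨x, hxab, hxH⟩, rfl⟩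
    have hab := inner_mul_inner_nonpos_of_mem_arc hxab
      (inner_eq_zero_of_mem_halfCircle hpS hv hpv hn hxH)
    have hna := hW a ⟨ha, hap⟩
    have hnb := hW b ⟨hb, hbp⟩
    rcases hna.lt_or_gt with hna | hna
    · have hnb : 0 < ⟪n, b⟫ := hnb.lt_or_gt.resolve_left fun hnb => by nlinarith
      have hq : (b, a) ∈ transversals P p n :=
        ⟨⟨⟨⟨hb, hbp⟩, hnb⟩, ⟨ha, hap⟩, by rwa [inner_neg_left, neg_pos]⟩,
          fun h : a = -b => hba (by rw [h, neg_neg])⟩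
      exact ⟨(b, a), ⟨hq, (key _ hq).1 ⟨x, arc_comm a b ▸ hxab, hxH⟩⟩, Sym2.eq_swap⟩
    · have hnb : ⟪n, b⟫ < 0 := hnb.lt_or_gt.resolve_right fun hnb => by nlinarith
      have hq : (a, b) ∈ transversals P p n :=
        ⟨⟨⟨⟨ha, hap⟩, hna⟩, ⟨hb, hbp⟩, by rwa [inner_neg_left, neg_pos]⟩, hba⟩
      exact ⟨(a, b), ⟨hq, (key _ hq).1 ⟨x, hxab, hxH⟩⟩, rfl⟩
  · rintro ⟨⟨a, b⟩, ⟨hq, hc⟩, rfl⟩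
    obtain ⟨⟨⟨⟨ha, hap⟩, hna⟩, ⟨hb, hbp⟩, hnb⟩, hba⟩ := id hq
    refine ⟨a, b, ha, hb, ?_, hba, hap, hbp, (key _ hq).2 hc, rfl⟩
    rintro rfl
    rw [inner_neg_left] at hnb
    linarith

theorem count_edges_meeting_halfCircle_general
    (k : ℕ) (hk : 3 ≤ k) (P : Set E3) (hPS : P ⊆ unitSphere)
    (hcard : P.ncard = k) (hgen : GenPos P)
    (p : E3) (hp : p ∈ P) (v : E3) (hv : ‖v‖ = 1) (hpv : ⟪p, v⟫ = 0)
    (hQ : ((Submodule.span ℝ {p, v} : Set E3) ∩ unitSphere) ∩ phat P =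
      ({p, -p} : Set E3)) :
    (Set.ncard {e : Sym2 E3 | ∃ a b, a ∈ phat P ∧ b ∈ phat P ∧ b ≠ a ∧ b ≠ -a ∧
        a ∉ ({p, -p} : Set E3) ∧ b ∉ ({p, -p} : Set E3) ∧
        (arc a b ∩ halfCircle p v).Nonempty ∧ e = s(a, b)} : ℚ) =
      ((k : ℚ) - 1) * ((k : ℚ) - 2) / 2 := by
  have hP : 3 ≤ P.ncard := hcard ▸ hk
  have hpS : ‖p‖ = 1 := hPS hp
  have h0 : (0 : E3) ∉ P := fun h => by simpa [unitSphere] using hPS h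
  obtain ⟨n, hn⟩ := exists_inner_eq_zero_iff_mem_span_pair hpS hv hpv
  have hW : ∀ x ∈ phat P \ {p, -p}, ⟪n, x⟫ ≠ 0 := fun x hx hnx =>
    hx.2 (hQ ▸ ⟨⟨(hn x).1 hnx, phat_subset_unitSphere hPS hx.1⟩, hx.1⟩)
  have hcount := two_mul_ncard_setOf_inner_crossing_pos (Set.finite_of_ncard_pos (by omega))
    hgen hp hv hpv hn
  rw [ncard_transversals hgen hP h0 hp hW, hcard] at hcount
  rw [setOf_edges_meeting_halfCircle_eq_image hgen hp hpS hv hpv hn hW,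
    (injOn_sym2_mk_transversals.mono (Set.sep_subset _ _)).ncard_image]
  obtain ⟨m, rfl⟩ : ∃ m, k = m + 3 := ⟨k - 3, by omega⟩
  rw [show m + 3 - 1 = m + 2 by omega, show m + 3 - 2 = m + 1 by omega] at hcount
  qify at hcount
  push_cast
  linarith

theorem count_edges_meeting_halfCircle
    (k : ℕ) (hk : 3 ≤ k) (P : Set E3) (hPS : P ⊆ unitSphere)
    (hPfin : P.Finite) (hcard : P.ncard = k) (hgen : GenPos P)
    (p : E3) (hp : p ∈ P) (v : E3) (hv : ‖v‖ = 1) (hpv : ⟪p, v⟫ = 0)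
    (hQ : ((Submodule.span ℝ {p, v} : Set E3) ∩ unitSphere) ∩ phat P =
      ({p, -p} : Set E3)) :
    (Set.ncard {e : Sym2 E3 | ∃ a b, a ∈ phat P ∧ b ∈ phat P ∧ b ≠ a ∧ b ≠ -a ∧
        a ∉ ({p, -p} : Set E3) ∧ b ∉ ({p, -p} : Set E3) ∧
        (arc a b ∩ halfCircle p v).Nonempty ∧ e = s(a, b)} : ℚ) =
      ((k : ℚ) - 1) * ((k : ℚ) - 2) / 2 :=
  count_edges_meeting_halfCircle_general k hk P hPS hcard hgen p hp v hv hpv hQ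

end
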